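/- arXiv:0806.3722 — 4 statements merged into one kernel-verified Lean document; each statement's English description precedes it below -/
import Mathlib

section
/- Let F be a finite subset of ℤ² that is uniquely determined by its line sums. If integers i1, i2, j0 satisfy (i1, j0) ∈ F and (i2, j0) ∉ F, then r_{i1}(F) > r_{i2}(F). -/
open Finset

/-- The row sum `r_i(F)`: the number of elements of `F` in row `i`. -/
def rowSum (F : Finset (ℤ × ℤ)) (i : ℤ) : ℤ :=
  ((F.filter fun p => p.1 = i).card : ℤ)

/-- The column sum `c_j(F)`: the number of elements of `F` in column `j`. -/
def colSum (F : Finset (ℤ × ℤ)) (j : ℤ) : ℤ :=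
  ((F.filter fun p => p.2 = j).card : ℤ)

/-- `F` is uniquely determined by its line sums. -/
def uniquelyDetermined (F : Finset (ℤ × ℤ)) : Prop :=
  ∀ F' : Finset (ℤ × ℤ),
    (∀ i, rowSum F' i = rowSum F i) → (∀ j, colSum F' j = colSum F j) → F' = F

/-- `Σ_j |c_j(F1) − c_j(F2)| + Σ_i |r_i(F1) − r_i(F2)|`; the sums over all of `ℤ`
reduce to the finite index sets below, since all other terms vanish. -/
def lineDiff (F1 F2 : Finset (ℤ × ℤ)) : ℤ :=
  (∑ j ∈ (F1 ∪ F2).image Prod.snd, |colSum F1 j - colSum F2 j|)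
    + ∑ i ∈ (F1 ∪ F2).image Prod.fst, |rowSum F1 i - rowSum F2 i|

/-- `α(F1, F2)`. -/
noncomputable def alpha (F1 F2 : Finset (ℤ × ℤ)) : ℝ :=
  (lineDiff F1 F2 : ℝ) / 2

lemma rowSum_insert (F : Finset (ℤ × ℤ)) (a : ℤ × ℤ) (ha : a ∉ F) (i : ℤ) :
    rowSum (insert a F) i = rowSum F i + if a.1 = i then 1 else 0 := by
  unfold rowSum
  rw [Finset.filter_insert]
  split_ifs with h
  · rw [Finset.card_insert_of_notMem (fun hm => ha (Finset.mem_filter.mp hm).1)]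
    push_cast; ring
  · simp

lemma rowSum_erase (F : Finset (ℤ × ℤ)) (a : ℤ × ℤ) (ha : a ∈ F) (i : ℤ) :
    rowSum (F.erase a) i = rowSum F i - if a.1 = i then 1 else 0 := by
  unfold rowSum
  rw [Finset.filter_erase]
  split_ifs with h
  · rw [Finset.card_erase_of_mem (Finset.mem_filter.mpr ⟨ha, h⟩)]
    have : 0 < (F.filter fun p => p.1 = i).card :=
      Finset.card_pos.mpr ⟨a, Finset.mem_filter.mpr ⟨ha, h⟩⟩
    push_cast [Nat.cast_sub (by omega : 1 ≤ (F.filter fun p => p.1 = i).card)]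
    ring
  · have : a ∉ F.filter fun p => p.1 = i := fun hm => h (Finset.mem_filter.mp hm).2
    rw [Finset.erase_eq_of_notMem this]
    simp

lemma colSum_insert (F : Finset (ℤ × ℤ)) (a : ℤ × ℤ) (ha : a ∉ F) (j : ℤ) :
    colSum (insert a F) j = colSum F j + if a.2 = j then 1 else 0 := by
  unfold colSum
  rw [Finset.filter_insert]
  split_ifs with h
  · rw [Finset.card_insert_of_notMem (fun hm => ha (Finset.mem_filter.mp hm).1)]
    push_cast; ring
  · simp

lemma colSum_erase (F : Finset (ℤ × ℤ)) (a : ℤ × ℤ) (ha : a ∈ F) (j : ℤ) :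
    colSum (F.erase a) j = colSum F j - if a.2 = j then 1 else 0 := by
  unfold colSum
  rw [Finset.filter_erase]
  split_ifs with h
  · rw [Finset.card_erase_of_mem (Finset.mem_filter.mpr ⟨ha, h⟩)]
    have : 0 < (F.filter fun p => p.2 = j).card :=
      Finset.card_pos.mpr ⟨a, Finset.mem_filter.mpr ⟨ha, h⟩⟩
    push_cast [Nat.cast_sub (by omega : 1 ≤ (F.filter fun p => p.2 = j).card)]
    ring
  · have : a ∉ F.filter fun p => p.2 = j := fun hm => h (Finset.mem_filter.mp hm).2
    rw [Finset.erase_eq_of_notMem this]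
    simp

/-- If `F` is uniquely determined, `(i1, j0) ∈ F` and `(i2, j0) ∉ F`,
then `r_{i1}(F) > r_{i2}(F)`. -/
theorem rowSum_lt_of_uniquelyDetermined (F : Finset (ℤ × ℤ))
    (hF : uniquelyDetermined F) (i1 i2 j0 : ℤ)
    (h1 : (i1, j0) ∈ F) (h2 : (i2, j0) ∉ F) :
    rowSum F i2 < rowSum F i1 := by
  have hne : i1 ≠ i2 := by rintro rfl; exact h2 h1
  -- key: no switching component, so every column of row i2 is a column of row i1
  have key : ∀ j, (i2, j) ∈ F → (i1, j) ∈ F := by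
    intro j1 hj1
    by_contra hj1'
    -- build the switched set
    set E := (F.erase (i1, j0)).erase (i2, j1) with hE
    have hm1 : (i2, j1) ∈ F.erase (i1, j0) :=
      Finset.mem_erase.mpr ⟨by simp [hne.symm], hj1⟩
    have hn1 : (i1, j1) ∉ E := fun h => hj1' (Finset.mem_of_mem_erase (Finset.mem_of_mem_erase h))
    have hn2 : (i2, j0) ∉ insert (i1, j1) E := by
      simp only [Finset.mem_insert]
      rintro (h | h)
      · exact hne (congrArg Prod.fst h).symm
      · exact h2 (Finset.mem_of_mem_erase (Finset.mem_of_mem_erase h))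
    set F' := insert (i2, j0) (insert (i1, j1) E) with hF'
    have hrow : ∀ i, rowSum F' i = rowSum F i := by
      intro i
      rw [hF', rowSum_insert _ _ hn2, rowSum_insert _ _ hn1, hE,
        rowSum_erase _ _ hm1, rowSum_erase _ _ h1]
      simp only
      ring
    have hcol : ∀ j, colSum F' j = colSum F j := by
      intro j
      rw [hF', colSum_insert _ _ hn2, colSum_insert _ _ hn1, hE,
        colSum_erase _ _ hm1, colSum_erase _ _ h1]
      simp only
      ring
    have := hF F' hrow hcol
    apply h2
    rw [← this, hF']
    exact Finset.mem_insert_self _ _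
  -- now count
  unfold rowSum
  have himg : (F.filter fun p => p.1 = i2).image (fun p => (i1, p.2)) ⊂
      F.filter fun p => p.1 = i1 := by
    constructor
    · intro q hq
      obtain ⟨p, hp, rfl⟩ := Finset.mem_image.mp hq
      obtain ⟨hpF, hp2⟩ := Finset.mem_filter.mp hp
      refine Finset.mem_filter.mpr ⟨?_, rfl⟩
      have : p = (i2, p.2) := by ext <;> simp [hp2]
      exact key p.2 (this ▸ hpF)
    · intro hsub
      have : (i1, j0) ∈ (F.filter fun p => p.1 = i2).image (fun p => (i1, p.2)) :=
        hsub (Finset.mem_filter.mpr ⟨h1, rfl⟩)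
      obtain ⟨p, hp, hpe⟩ := Finset.mem_image.mp this
      obtain ⟨hpF, hp2⟩ := Finset.mem_filter.mp hp
      have : p = (i2, j0) := by
        have := congrArg Prod.snd hpe
        ext <;> simp_all
      exact h2 (this ▸ hpF)
  have hcardimg : ((F.filter fun p => p.1 = i2).image (fun p => (i1, p.2))).card =
      (F.filter fun p => p.1 = i2).card := by
    apply Finset.card_image_of_injOn
    intro p hp q hq h
    have hp2 := (Finset.mem_filter.mp hp).2
    have hq2 := (Finset.mem_filter.mp hq).2
    have := congrArg Prod.snd h
    ext <;> simp_all
  have := Finset.card_lt_card himg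
  omega
end

section
/- Let F1 be a finite subset of ℤ² that is uniquely determined by its line sums, and let F2 be a finite subset of ℤ². Suppose points (x_1,y_1), (x_2,y_2), …, (x_t,y_t) all lie in F1 \ F2 and points (x_2,y_1), (x_3,y_2), …, (x_t,y_{t−1}) all lie in F2 \ F1. Then r_{x_1}(F1) > r_{x_2}(F1) > … > r_{x_t}(F1); in particular the rows x_1, …, x_t have pairwise different row sums in F1. -/
open Finset

lemma card_swap {α : Type*} [DecidableEq α] {s : Finset α} {p q : α}
    (hp : p ∈ s) (hq : q ∉ s) : (insert q (s.erase p)).card = s.card := by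
  have hpos : 1 ≤ s.card := Finset.card_pos.mpr ⟨p, hp⟩
  rw [Finset.card_insert_of_notMem (fun h => hq (Finset.mem_of_mem_erase h)),
    Finset.card_erase_of_mem hp]
  omega

lemma step_lt (F : Finset (ℤ × ℤ)) (hU : uniquelyDetermined F) {a a' b : ℤ}
    (h1 : (a, b) ∈ F) (h2 : (a', b) ∉ F) : rowSum F a' < rowSum F a := by
  by_contra hle
  push_neg at hle
  have hane : a ≠ a' := fun h => h2 (h ▸ h1)
  obtain ⟨c, hc1, hc2⟩ : ∃ c, (a', c) ∈ F ∧ (a, c) ∉ F := by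
    by_contra hc
    push_neg at hc
    have hmaps : ∀ p ∈ F.filter (fun p => p.1 = a'),
        (a, p.2) ∈ (F.filter fun p => p.1 = a).erase (a, b) := by
      intro p hp
      simp only [mem_filter] at hp
      obtain ⟨hpF, hp1⟩ := hp
      have hp2 : (a', p.2) ∈ F := by
        have : p = (a', p.2) := Prod.ext hp1 rfl
        rwa [this] at hpF
      refine Finset.mem_erase.mpr ⟨?_, mem_filter.mpr ⟨hc _ hp2, rfl⟩⟩
      intro h
      have : p.2 = b := by simpa using congrArg Prod.snd h
      exact h2 (this ▸ hp2)
    have hinj : Set.InjOn (fun p : ℤ × ℤ => (a, p.2))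
        (F.filter (fun p => p.1 = a')) := by
      intro p hp q hq hpq
      simp only [coe_filter, Set.mem_setOf_eq] at hp hq
      have h2' : p.2 = q.2 := by simpa using congrArg Prod.snd hpq
      exact Prod.ext (hp.2.trans hq.2.symm) h2'
    have hcard := Finset.card_le_card_of_injOn _ hmaps hinj
    have hmem : (a, b) ∈ F.filter (fun p => p.1 = a) := mem_filter.mpr ⟨h1, rfl⟩
    have hpos : 1 ≤ (F.filter fun p => p.1 = a).card := Finset.card_pos.mpr ⟨_, hmem⟩
    rw [Finset.card_erase_of_mem hmem] at hcard
    unfold rowSum at hle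
    omega
  have hbc : b ≠ c := fun h => h2 (h ▸ hc1)
  set F' := insert (a', b) (insert (a, c) ((F.erase (a, b)).erase (a', c))) with hF'
  have hrow : ∀ i, rowSum F' i = rowSum F i := by
    intro i
    unfold rowSum
    congr 1
    rw [hF', filter_insert, filter_insert, filter_erase, filter_erase]
    by_cases hia : i = a
    · rw [hia]
      rw [if_neg (fun h : a' = a => hane h.symm), if_pos rfl,
        Finset.erase_eq_of_notMem
          (fun h => hane ((mem_filter.mp (Finset.mem_of_mem_erase h)).2).symm)]
      exact card_swap (mem_filter.mpr ⟨h1, rfl⟩) (fun h => hc2 (mem_filter.mp h).1)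
    · by_cases hia' : i = a'
      · rw [hia']
        rw [if_pos rfl, if_neg (fun h : a = a' => hane h)]
        have hnoop : ((F.filter fun p => p.1 = a').erase (a, b))
            = F.filter fun p => p.1 = a' :=
          Finset.erase_eq_of_notMem (fun h => hane (mem_filter.mp h).2)
        rw [hnoop]
        exact card_swap (mem_filter.mpr ⟨hc1, rfl⟩) (fun h => h2 (mem_filter.mp h).1)
      · rw [if_neg (fun h : a' = i => hia' h.symm), if_neg (fun h : a = i => hia h.symm),
          Finset.erase_eq_of_notMem
            (fun h => hia' ((mem_filter.mp (Finset.mem_of_mem_erase h)).2).symm),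
          Finset.erase_eq_of_notMem (fun h => hia (mem_filter.mp h).2.symm)]
  have hcol : ∀ j, colSum F' j = colSum F j := by
    intro j
    unfold colSum
    congr 1
    rw [hF', filter_insert, filter_insert, filter_erase, filter_erase]
    by_cases hjb : j = b
    · rw [hjb]
      rw [if_pos rfl, if_neg (fun h : c = b => hbc h.symm),
        Finset.erase_eq_of_notMem
          (fun h => hbc ((mem_filter.mp (Finset.mem_of_mem_erase h)).2).symm)]
      exact card_swap (mem_filter.mpr ⟨h1, rfl⟩) (fun h => h2 (mem_filter.mp h).1)
    · by_cases hjc : j = c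
      · rw [hjc]
        rw [if_neg (fun h : b = c => hbc h), if_pos rfl]
        have hnoop : ((F.filter fun p => p.2 = c).erase (a, b))
            = F.filter fun p => p.2 = c :=
          Finset.erase_eq_of_notMem (fun h => hbc (mem_filter.mp h).2)
        rw [hnoop]
        exact card_swap (mem_filter.mpr ⟨hc1, rfl⟩) (fun h => hc2 (mem_filter.mp h).1)
      · rw [if_neg (fun h : b = j => hjb h.symm), if_neg (fun h : c = j => hjc h.symm),
          Finset.erase_eq_of_notMem
            (fun h => hjc ((mem_filter.mp (Finset.mem_of_mem_erase h)).2).symm),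
          Finset.erase_eq_of_notMem (fun h => hjb (mem_filter.mp h).2.symm)]
  have hEq := hU F' hrow hcol
  apply hc2
  rw [← hEq]
  exact Finset.mem_insert_of_mem (Finset.mem_insert_self _ _)

/-- If `F1` is uniquely determined, the points `(x_s, y_s)` for `1 ≤ s ≤ t` lie in
`F1 \\ F2` and the points `(x_{s+1}, y_s)` for `1 ≤ s ≤ t-1` lie in `F2 \\ F1` (a
staircase), then `r_{x_1}(F1) > r_{x_2}(F1) > … > r_{x_t}(F1)`; in particular the rows
`x_1, …, x_t` have pairwise different row sums in `F1`. -/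
theorem staircase_rowSums_strict_anti (F1 F2 : Finset (ℤ × ℤ))
    (hF1 : uniquelyDetermined F1) (t : ℕ) (x y : ℕ → ℤ)
    (hin : ∀ s : ℕ, 1 ≤ s → s ≤ t → (x s, y s) ∈ F1 ∧ (x s, y s) ∉ F2)
    (hout : ∀ s : ℕ, 1 ≤ s → s < t → (x (s + 1), y s) ∈ F2 ∧ (x (s + 1), y s) ∉ F1) :
    (∀ s s' : ℕ, 1 ≤ s → s < s' → s' ≤ t → rowSum F1 (x s') < rowSum F1 (x s)) ∧
    (∀ s s' : ℕ, 1 ≤ s → s ≤ t → 1 ≤ s' → s' ≤ t → s ≠ s' →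
      rowSum F1 (x s) ≠ rowSum F1 (x s')) := by
  have step : ∀ s : ℕ, 1 ≤ s → s < t → rowSum F1 (x (s + 1)) < rowSum F1 (x s) :=
    fun s h1 h2 => step_lt F1 hF1 (hin s h1 (le_of_lt h2)).1 (hout s h1 h2).2
  have anti : ∀ s s' : ℕ, 1 ≤ s → s < s' → s' ≤ t →
      rowSum F1 (x s') < rowSum F1 (x s) := by
    intro s s' h1
    induction s' with
    | zero => omega
    | succ n ih =>
      intro h2 h3
      rcases Nat.lt_or_ge s n with h | h
      · exact lt_trans (step n (by omega) (by omega)) (ih (by omega) (by omega))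
      · have hs : s = n := by omega
        subst hs
        exact step s h1 (by omega)
  refine ⟨anti, ?_⟩
  intro s s' h1 h2 h3 h4 h5
  rcases lt_trichotomy s s' with h | h | h
  · exact (anti s s' h1 h h4).ne'
  · exact absurd h h5
  · exact (anti s' s h3 h h2).ne
end

section
/- Let F1 and F2 be finite subsets of ℤ² such that F1 is uniquely determined by its line sums and |F1| = |F2|. Put α = α(F1, F2). Then |F1 △ F2| ≤ α·√(8|F1| + 1) − α. -/
open Finset

open scoped symmDiff

-- helper : rowSum as indicator sum
lemma rowSum_eq_sum (F : Finset (ℤ × ℤ)) (i : ℤ) :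
    rowSum F i = ∑ p ∈ F, if p.1 = i then (1:ℤ) else 0 := by
  rw [rowSum, Finset.card_filter]
  push_cast
  rfl

lemma colSum_eq_sum (F : Finset (ℤ × ℤ)) (j : ℤ) :
    colSum F j = ∑ p ∈ F, if p.2 = j then (1:ℤ) else 0 := by
  rw [colSum, Finset.card_filter]
  push_cast
  rfl

-- no switching component
lemma noswitch (F : Finset (ℤ × ℤ)) (hF : uniquelyDetermined F)
    {i1 i2 j1 j2 : ℤ} (h11 : (i1, j1) ∈ F) (h22 : (i2, j2) ∈ F)
    (h12 : (i1, j2) ∉ F) (h21 : (i2, j1) ∉ F) : i1 = i2 ∨ j1 = j2 := by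
  by_contra hcon
  push_neg at hcon
  obtain ⟨hi, hj⟩ := hcon
  set a : ℤ × ℤ := (i1, j1)
  set b : ℤ × ℤ := (i2, j2)
  set c : ℤ × ℤ := (i1, j2)
  set d : ℤ × ℤ := (i2, j1)
  have hab : a ≠ b := by simp [a, b, hi]
  have hcd : c ≠ d := by simp [c, d, hi]
  set F' : Finset (ℤ × ℤ) := insert c (insert d ((F.erase a).erase b)) with hF'
  have hbmem : b ∈ (F.erase a) := Finset.mem_erase.2 ⟨Ne.symm hab, h22⟩
  have hcE : c ∉ insert d ((F.erase a).erase b) := by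
    simp only [Finset.mem_insert]
    push_neg
    exact ⟨hcd, fun h => h12 (Finset.mem_of_mem_erase (Finset.mem_of_mem_erase h))⟩
  have hdE : d ∉ (F.erase a).erase b := by
    intro h
    exact h21 (Finset.mem_of_mem_erase (Finset.mem_of_mem_erase h))
  have hsum : ∀ g : ℤ × ℤ → ℤ, ∑ p ∈ F', g p = g c + g d + (∑ p ∈ F, g p) - g a - g b := by
    intro g
    rw [hF', Finset.sum_insert hcE, Finset.sum_insert hdE,
      Finset.sum_erase_eq_sub hbmem, Finset.sum_erase_eq_sub h11]
    ring
  have hrow : ∀ i, rowSum F' i = rowSum F i := by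
    intro i
    rw [rowSum_eq_sum, rowSum_eq_sum, hsum]
    simp only [a, b, c, d]
    ring
  have hcol : ∀ j, colSum F' j = colSum F j := by
    intro j
    rw [colSum_eq_sum, colSum_eq_sum, hsum]
    simp only [a, b, c, d]
    ring
  have : F' = F := hF F' hrow hcol
  exact h12 (this ▸ Finset.mem_insert_self c _)

def rowSet (F : Finset (ℤ × ℤ)) (i : ℤ) : Finset ℤ :=
  (F.filter fun p => p.1 = i).image Prod.snd

lemma mem_rowSet {F : Finset (ℤ × ℤ)} {i j : ℤ} : j ∈ rowSet F i ↔ (i, j) ∈ F := by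
  simp only [rowSet, Finset.mem_image, Finset.mem_filter]
  constructor
  · rintro ⟨p, ⟨hp, rfl⟩, rfl⟩; exact hp
  · intro h; exact ⟨(i, j), ⟨h, rfl⟩, rfl⟩

lemma card_rowSet (F : Finset (ℤ × ℤ)) (i : ℤ) :
    (rowSet F i).card = (F.filter fun p => p.1 = i).card := by
  apply Finset.card_image_of_injOn
  intro p hp q hq h
  have hp' := (Finset.mem_filter.1 hp).2
  have hq' := (Finset.mem_filter.1 hq).2
  exact Prod.ext (hp'.trans hq'.symm) h

def types (F : Finset (ℤ × ℤ)) : Finset (Finset ℤ) :=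
  (F.image Prod.fst).image (rowSet F)

def kf (F : Finset (ℤ × ℤ)) (i : ℤ) : ℕ :=
  ((types F).filter fun S => rowSet F i ⊂ S).card

def lf (F : Finset (ℤ × ℤ)) (j : ℤ) : ℕ :=
  ((types F).filter fun S => j ∈ S).card

lemma kf_le (F : Finset (ℤ × ℤ)) (i : ℤ) : kf F i ≤ (types F).card :=
  Finset.card_le_card (Finset.filter_subset _ _)

lemma lf_le (F : Finset (ℤ × ℤ)) (j : ℤ) : lf F j ≤ (types F).card :=
  Finset.card_le_card (Finset.filter_subset _ _)

section Nested
variable {F : Finset (ℤ × ℤ)}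

-- nestedness from no switching
lemma nested (hF : uniquelyDetermined F) (i1 i2 : ℤ) :
    rowSet F i1 ⊆ rowSet F i2 ∨ rowSet F i2 ⊆ rowSet F i1 := by
  by_contra hcon
  push_neg at hcon
  obtain ⟨h1, h2⟩ := hcon
  obtain ⟨j1, hj1, hj1'⟩ := Finset.not_subset.1 h1
  obtain ⟨j2, hj2, hj2'⟩ := Finset.not_subset.1 h2
  rw [mem_rowSet] at hj1 hj2
  rw [mem_rowSet] at hj1' hj2'
  have t1 : (i1, j1) ∈ F := hj1
  have t2 : (i2, j2) ∈ F := hj2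
  have t3 : (i1, j2) ∉ F := hj2'
  have t4 : (i2, j1) ∉ F := hj1'
  rcases @noswitch F hF i1 i2 j1 j2 t1 t2 t3 t4 with h | h
  · subst h; exact t4 t1
  · subst h; exact t4 t2

lemma types_comparable (hF : uniquelyDetermined F) {S T : Finset ℤ}
    (hS : S ∈ types F) (hT : T ∈ types F) : S ⊆ T ∨ T ⊆ S := by
  obtain ⟨i1, _, rfl⟩ := Finset.mem_image.1 hS
  obtain ⟨i2, _, rfl⟩ := Finset.mem_image.1 hT
  exact nested hF i1 i2

lemma lf_gt_kf (hF : uniquelyDetermined F) {i j : ℤ} (h : (i, j) ∈ F) :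
    kf F i + 1 ≤ lf F j := by
  have hmem : rowSet F i ∈ types F := by
    refine Finset.mem_image.2 ⟨i, ?_, rfl⟩
    exact Finset.mem_image.2 ⟨(i, j), h, rfl⟩
  have hsub : insert (rowSet F i) ((types F).filter fun S => rowSet F i ⊂ S)
      ⊆ (types F).filter fun S => j ∈ S := by
    intro S hS
    rcases Finset.mem_insert.1 hS with rfl | hS
    · exact Finset.mem_filter.2 ⟨hmem, mem_rowSet.2 h⟩
    · have := Finset.mem_filter.1 hS
      exact Finset.mem_filter.2 ⟨this.1, this.2.subset (mem_rowSet.2 h)⟩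
  have hni : rowSet F i ∉ (types F).filter fun S => rowSet F i ⊂ S := by
    simp only [Finset.mem_filter]
    rintro ⟨-, h'⟩
    exact (lt_irrefl _ h')
  calc kf F i + 1 = (insert (rowSet F i) ((types F).filter fun S => rowSet F i ⊂ S)).card := by
        rw [Finset.card_insert_of_notMem hni, kf]
    _ ≤ _ := Finset.card_le_card hsub

lemma lf_le_kf (hF : uniquelyDetermined F) {i j : ℤ} (h : (i, j) ∉ F) :
    lf F j ≤ kf F i := by
  apply Finset.card_le_card
  intro S hS
  obtain ⟨hS1, hS2⟩ := Finset.mem_filter.1 hS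
  refine Finset.mem_filter.2 ⟨hS1, ?_⟩
  have hcomp : rowSet F i ⊆ S ∨ S ⊆ rowSet F i := by
    obtain ⟨i', _, rfl⟩ := Finset.mem_image.1 hS1
    exact nested hF i i'
  have hjn : j ∉ rowSet F i := fun hj => h (mem_rowSet.1 hj)
  rcases hcomp with hc | hc
  · exact ssubset_of_subset_of_ne hc (fun he => hjn (he ▸ hS2))
  · exact absurd (hc hS2) hjn

end Nested
-- sum of distinct positive naturals
lemma sum_distinct_pos (s : Finset ℕ) (hs : ∀ x ∈ s, 1 ≤ x) :
    s.card * (s.card + 1) ≤ 2 * ∑ x ∈ s, x := by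
  induction s using Finset.strongInduction with
  | _ s ih =>
    rcases s.eq_empty_or_nonempty with rfl | hne
    · simp
    · set M := s.max' hne with hM
      have hMs : M ∈ s := s.max'_mem hne
      have hsub : s ⊆ Finset.Icc 1 M := by
        intro x hx
        exact Finset.mem_Icc.2 ⟨hs x hx, s.le_max' x hx⟩
      have hcM : s.card ≤ M := by
        have := Finset.card_le_card hsub
        simpa [Nat.card_Icc] using this
      have herase : (s.erase M) ⊂ s := Finset.erase_ssubset hMs
      have hIH := ih (s.erase M) herase (fun x hx => hs x (Finset.mem_of_mem_erase hx))
      have hcard : (s.erase M).card = s.card - 1 := Finset.card_erase_of_mem hMs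
      have hsum : ∑ x ∈ s.erase M, x + M = ∑ x ∈ s, x := Finset.sum_erase_add s _ hMs
      obtain ⟨c, hc⟩ : ∃ c, s.card = c + 1 :=
        ⟨s.card - 1, (Nat.succ_pred_eq_of_pos (Finset.card_pos.2 hne)).symm⟩
      rw [hc] at hcM ⊢
      rw [hcard, hc] at hIH
      simp only [Nat.add_sub_cancel] at hIH
      nlinarith [hIH, hcM, hsum]

lemma card_injOn_types {F : Finset (ℤ × ℤ)} (hF : uniquelyDetermined F) :
    Set.InjOn Finset.card (types F : Set (Finset ℤ)) := by
  intro S hS T hT h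
  rcases types_comparable hF hS hT with hc | hc
  · exact Finset.eq_of_subset_of_card_le hc (le_of_eq h.symm)
  · exact (Finset.eq_of_subset_of_card_le hc (le_of_eq h)).symm

lemma types_nonempty_mem {F : Finset (ℤ × ℤ)} {S : Finset ℤ} (hS : S ∈ types F) :
    1 ≤ S.card := by
  obtain ⟨i, hi, rfl⟩ := Finset.mem_image.1 hS
  obtain ⟨p, hp, rfl⟩ := Finset.mem_image.1 hi
  refine Finset.card_pos.2 ⟨p.2, mem_rowSet.2 ?_⟩
  exact hp

-- sum over image ≤ sum (ℕ valued)
lemma sum_image_le_nat {α β : Type*} [DecidableEq α] [DecidableEq β] (s : Finset α) (f : α → β) (g : β → ℕ) :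
    ∑ S ∈ s.image f, g S ≤ ∑ i ∈ s, g (f i) := by
  induction s using Finset.induction with
  | empty => simp
  | @insert a s ha ih =>
    rw [Finset.image_insert, Finset.sum_insert ha]
    by_cases hm : f a ∈ s.image f
    · rw [Finset.insert_eq_self.2 hm]
      exact le_trans ih (Nat.le_add_left _ _)
    · rw [Finset.sum_insert hm]
      exact Nat.add_le_add_left ih _

-- main counting bound
lemma types_card_bound {F : Finset (ℤ × ℤ)} (hF : uniquelyDetermined F) :
    (types F).card * ((types F).card + 1) ≤ 2 * F.card := by
  have h1 : F.card = ∑ i ∈ F.image Prod.fst, (F.filter fun p => p.1 = i).card :=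
    Finset.card_eq_sum_card_fiberwise (fun p hp => Finset.mem_image.2 ⟨p, hp, rfl⟩)
  have h2 : F.card = ∑ i ∈ F.image Prod.fst, (rowSet F i).card := by
    rw [h1]; exact Finset.sum_congr rfl fun i _ => (card_rowSet F i).symm
  have h3 : ∑ S ∈ types F, S.card ≤ F.card := by
    rw [h2]; exact sum_image_le_nat _ _ _
  have h4 : ∑ x ∈ (types F).image Finset.card, x = ∑ S ∈ types F, S.card :=
    Finset.sum_image fun S hS T hT h => card_injOn_types hF hS hT h
  have h5 : ((types F).image Finset.card).card = (types F).card :=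
    Finset.card_image_of_injOn (card_injOn_types hF)
  have h6 := sum_distinct_pos ((types F).image Finset.card) (by
    intro x hx
    obtain ⟨S, hS, rfl⟩ := Finset.mem_image.1 hx
    exact types_nonempty_mem hS)
  rw [h5, h4] at h6
  omega
lemma sum_snd_eq (F : Finset (ℤ × ℤ)) (t : Finset ℤ) (h : ∀ p ∈ F, p.2 ∈ t) (g : ℤ → ℤ) :
    ∑ p ∈ F, g p.2 = ∑ j ∈ t, g j * colSum F j := by
  rw [← Finset.sum_fiberwise_of_maps_to h (fun p => g p.2)]
  refine Finset.sum_congr rfl fun j hj => ?_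
  have h2 : ∀ p ∈ F.filter (fun p => p.2 = j), g p.2 = g j := by
    intro p hp; rw [(Finset.mem_filter.1 hp).2]
  rw [Finset.sum_congr rfl h2, Finset.sum_const, colSum, nsmul_eq_mul, mul_comm]

lemma sum_fst_eq (F : Finset (ℤ × ℤ)) (t : Finset ℤ) (h : ∀ p ∈ F, p.1 ∈ t) (g : ℤ → ℤ) :
    ∑ p ∈ F, g p.1 = ∑ i ∈ t, g i * rowSum F i := by
  rw [← Finset.sum_fiberwise_of_maps_to h (fun p => g p.1)]
  refine Finset.sum_congr rfl fun i hi => ?_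
  have h2 : ∀ p ∈ F.filter (fun p => p.1 = i), g p.1 = g i := by
    intro p hp; rw [(Finset.mem_filter.1 hp).2]
  rw [Finset.sum_congr rfl h2, Finset.sum_const, rowSum, nsmul_eq_mul, mul_comm]

open scoped symmDiff

lemma key (F1 F2 : Finset (ℤ × ℤ)) (hF1 : uniquelyDetermined F1)
    (hcard : F1.card = F2.card) :
    ((F1 ∆ F2).card : ℤ) ≤ ((types F1).card : ℤ) * lineDiff F1 F2 := by
  classical
  set J := (F1 ∪ F2).image Prod.snd with hJdef
  set I := (F1 ∪ F2).image Prod.fst with hIdef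
  set m := ((types F1).card : ℤ) with hmdef
  set g : ℤ × ℤ → ℤ := fun p => (lf F1 p.2 : ℤ) - (kf F1 p.1 : ℤ) with hgdef
  -- symm diff cardinalities
  have hAB : (F1 \ F2).card = (F2 \ F1).card := by
    have h1 := Finset.card_sdiff_add_card_inter F1 F2
    have h2 := Finset.card_sdiff_add_card_inter F2 F1
    rw [Finset.inter_comm] at h2
    omega
  have hd : (F1 ∆ F2).card = (F1 \ F2).card + (F2 \ F1).card := by
    rw [symmDiff_def, Finset.sup_eq_union]
    exact Finset.card_union_of_disjoint disjoint_sdiff_sdiff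
  -- claim 1 : card (F1 \ F2) ≤ Σ_{F1} g - Σ_{F2} g
  have e1 : ∑ p ∈ F1, g p = ∑ p ∈ F1 ∩ F2, g p + ∑ p ∈ F1 \ F2, g p :=
    (Finset.sum_inter_add_sum_sdiff F1 F2 g).symm
  have e2 : ∑ p ∈ F2, g p = ∑ p ∈ F1 ∩ F2, g p + ∑ p ∈ F2 \ F1, g p := by
    rw [Finset.inter_comm]
    exact (Finset.sum_inter_add_sum_sdiff F2 F1 g).symm
  have s1 : ((F1 \ F2).card : ℤ) ≤ ∑ p ∈ F1 \ F2, g p := by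
    calc ((F1 \ F2).card : ℤ) = ∑ _p ∈ F1 \ F2, (1 : ℤ) := by simp
      _ ≤ _ := by
          refine Finset.sum_le_sum fun p hp => ?_
          have hpF : p ∈ F1 := (Finset.mem_sdiff.1 hp).1
          have hlk := lf_gt_kf hF1 (show (p.1, p.2) ∈ F1 by simpa using hpF)
          simp only [hgdef]
          push_cast
          omega
  have s2 : ∑ p ∈ F2 \ F1, g p ≤ 0 := by
    refine Finset.sum_nonpos fun p hp => ?_
    have hpF : p ∉ F1 := (Finset.mem_sdiff.1 hp).2
    have hlk := lf_le_kf hF1 (show (p.1, p.2) ∉ F1 by simpa using hpF)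
    simp only [hgdef]
    push_cast
    omega
  have claim1 : ((F1 \ F2).card : ℤ) ≤ ∑ p ∈ F1, g p - ∑ p ∈ F2, g p := by
    rw [e1, e2]; linarith
  -- maps-to facts
  have hJ1 : ∀ p ∈ F1, p.2 ∈ J := fun p hp =>
    Finset.mem_image.2 ⟨p, Finset.mem_union_left _ hp, rfl⟩
  have hJ2 : ∀ p ∈ F2, p.2 ∈ J := fun p hp =>
    Finset.mem_image.2 ⟨p, Finset.mem_union_right _ hp, rfl⟩
  have hI1 : ∀ p ∈ F1, p.1 ∈ I := fun p hp =>
    Finset.mem_image.2 ⟨p, Finset.mem_union_left _ hp, rfl⟩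
  have hI2 : ∀ p ∈ F2, p.1 ∈ I := fun p hp =>
    Finset.mem_image.2 ⟨p, Finset.mem_union_right _ hp, rfl⟩
  -- split sums
  have hsplit1 : ∑ p ∈ F1, g p
      = ∑ j ∈ J, (lf F1 j : ℤ) * colSum F1 j - ∑ i ∈ I, (kf F1 i : ℤ) * rowSum F1 i := by
    simp only [hgdef, Finset.sum_sub_distrib]
    rw [sum_snd_eq F1 J hJ1 (fun j => (lf F1 j : ℤ)), sum_fst_eq F1 I hI1 (fun i => (kf F1 i : ℤ))]
  have hsplit2 : ∑ p ∈ F2, g p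
      = ∑ j ∈ J, (lf F1 j : ℤ) * colSum F2 j - ∑ i ∈ I, (kf F1 i : ℤ) * rowSum F2 i := by
    simp only [hgdef, Finset.sum_sub_distrib]
    rw [sum_snd_eq F2 J hJ2 (fun j => (lf F1 j : ℤ)), sum_fst_eq F2 I hI2 (fun i => (kf F1 i : ℤ))]
  -- total line sums equal cardinalities
  have hc1 : ∑ j ∈ J, colSum F1 j = (F1.card : ℤ) := by
    have := sum_snd_eq F1 J hJ1 (fun _ => (1 : ℤ))
    simpa using this.symm
  have hc2 : ∑ j ∈ J, colSum F2 j = (F2.card : ℤ) := by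
    have := sum_snd_eq F2 J hJ2 (fun _ => (1 : ℤ))
    simpa using this.symm
  have hr1 : ∑ i ∈ I, rowSum F1 i = (F1.card : ℤ) := by
    have := sum_fst_eq F1 I hI1 (fun _ => (1 : ℤ))
    simpa using this.symm
  have hr2 : ∑ i ∈ I, rowSum F2 i = (F2.card : ℤ) := by
    have := sum_fst_eq F2 I hI2 (fun _ => (1 : ℤ))
    simpa using this.symm
  have hδ0 : ∑ j ∈ J, (colSum F1 j - colSum F2 j) = 0 := by
    rw [Finset.sum_sub_distrib, hc1, hc2, hcard]; ring
  have hρ0 : ∑ i ∈ I, (rowSum F1 i - rowSum F2 i) = 0 := by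
    rw [Finset.sum_sub_distrib, hr1, hr2, hcard]; ring
  -- claim 2
  have tcol : ∑ j ∈ J, (2 * (lf F1 j : ℤ) - m) * (colSum F1 j - colSum F2 j)
      = 2 * (∑ j ∈ J, (lf F1 j : ℤ) * colSum F1 j - ∑ j ∈ J, (lf F1 j : ℤ) * colSum F2 j) := by
    have expand : ∀ j ∈ J, (2 * (lf F1 j : ℤ) - m) * (colSum F1 j - colSum F2 j)
        = 2 * ((lf F1 j : ℤ) * colSum F1 j - (lf F1 j : ℤ) * colSum F2 j)
          - m * (colSum F1 j - colSum F2 j) := by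
      intro j _; ring
    rw [Finset.sum_congr rfl expand, Finset.sum_sub_distrib, ← Finset.mul_sum, ← Finset.mul_sum,
      hδ0, Finset.sum_sub_distrib]
    ring
  have trow : ∑ i ∈ I, (2 * (kf F1 i : ℤ) - m) * (rowSum F1 i - rowSum F2 i)
      = 2 * (∑ i ∈ I, (kf F1 i : ℤ) * rowSum F1 i - ∑ i ∈ I, (kf F1 i : ℤ) * rowSum F2 i) := by
    have expand : ∀ i ∈ I, (2 * (kf F1 i : ℤ) - m) * (rowSum F1 i - rowSum F2 i)
        = 2 * ((kf F1 i : ℤ) * rowSum F1 i - (kf F1 i : ℤ) * rowSum F2 i)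
          - m * (rowSum F1 i - rowSum F2 i) := by
      intro i _; ring
    rw [Finset.sum_congr rfl expand, Finset.sum_sub_distrib, ← Finset.mul_sum, ← Finset.mul_sum,
      hρ0, Finset.sum_sub_distrib]
    ring
  have bcol : ∑ j ∈ J, (2 * (lf F1 j : ℤ) - m) * (colSum F1 j - colSum F2 j)
      ≤ ∑ j ∈ J, m * |colSum F1 j - colSum F2 j| := by
    refine Finset.sum_le_sum fun j _ => ?_
    have h1 : |2 * (lf F1 j : ℤ) - m| ≤ m := by
      have := lf_le F1 j
      rw [abs_le]
      constructor <;> [skip; skip] <;> · simp only [hmdef]; push_cast; omega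
    calc (2 * (lf F1 j : ℤ) - m) * (colSum F1 j - colSum F2 j)
        ≤ |(2 * (lf F1 j : ℤ) - m) * (colSum F1 j - colSum F2 j)| := le_abs_self _
      _ = |2 * (lf F1 j : ℤ) - m| * |colSum F1 j - colSum F2 j| := abs_mul _ _
      _ ≤ m * |colSum F1 j - colSum F2 j| :=
          mul_le_mul_of_nonneg_right h1 (abs_nonneg _)
  have brow : -∑ i ∈ I, (2 * (kf F1 i : ℤ) - m) * (rowSum F1 i - rowSum F2 i)
      ≤ ∑ i ∈ I, m * |rowSum F1 i - rowSum F2 i| := by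
    rw [← Finset.sum_neg_distrib]
    refine Finset.sum_le_sum fun i _ => ?_
    have h1 : |2 * (kf F1 i : ℤ) - m| ≤ m := by
      have := kf_le F1 i
      rw [abs_le]
      constructor <;> [skip; skip] <;> · simp only [hmdef]; push_cast; omega
    calc -((2 * (kf F1 i : ℤ) - m) * (rowSum F1 i - rowSum F2 i))
        ≤ |(2 * (kf F1 i : ℤ) - m) * (rowSum F1 i - rowSum F2 i)| := neg_le_abs _
      _ = |2 * (kf F1 i : ℤ) - m| * |rowSum F1 i - rowSum F2 i| := abs_mul _ _
      _ ≤ m * |rowSum F1 i - rowSum F2 i| :=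
          mul_le_mul_of_nonneg_right h1 (abs_nonneg _)
  have claim2 : 2 * (∑ p ∈ F1, g p - ∑ p ∈ F2, g p) ≤ m * lineDiff F1 F2 := by
    have hexp : 2 * (∑ p ∈ F1, g p - ∑ p ∈ F2, g p)
        = ∑ j ∈ J, (2 * (lf F1 j : ℤ) - m) * (colSum F1 j - colSum F2 j)
          - ∑ i ∈ I, (2 * (kf F1 i : ℤ) - m) * (rowSum F1 i - rowSum F2 i) := by
      rw [hsplit1, hsplit2, tcol, trow]; ring
    have hline : m * lineDiff F1 F2
        = ∑ j ∈ J, m * |colSum F1 j - colSum F2 j| + ∑ i ∈ I, m * |rowSum F1 i - rowSum F2 i| := by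
      rw [lineDiff, ← hJdef, ← hIdef, mul_add, Finset.mul_sum, Finset.mul_sum]
    rw [hexp, hline]
    linarith [bcol, brow]
  -- conclude
  have : ((F1 ∆ F2).card : ℤ) = 2 * ((F1 \ F2).card : ℤ) := by
    rw [hd]; push_cast [hAB]; ring
  rw [this]
  linarith [claim1, claim2]

/-- If `F1` is uniquely determined and `|F1| = |F2|`, then with `α = α(F1, F2)` we have
`|F1 △ F2| ≤ α·√(8|F1| + 1) − α`. -/
theorem symmDiff_card_le (F1 F2 : Finset (ℤ × ℤ))
    (hF1 : uniquelyDetermined F1) (hcard : F1.card = F2.card) :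
    ((F1 ∆ F2).card : ℝ) ≤
      alpha F1 F2 * Real.sqrt (8 * F1.card + 1) - alpha F1 F2 := by
  have hkey := key F1 F2 hF1 hcard
  have hmb := types_card_bound hF1
  set m := (types F1).card with hm
  have hL0 : (0 : ℤ) ≤ lineDiff F1 F2 := by
    rw [lineDiff]
    apply add_nonneg <;> exact Finset.sum_nonneg fun _ _ => abs_nonneg _
  have hα0 : 0 ≤ alpha F1 F2 := by
    rw [alpha]
    have : (0:ℝ) ≤ (lineDiff F1 F2 : ℝ) := by exact_mod_cast hL0
    linarith
  have hmbR : (m : ℝ) * ((m : ℝ) + 1) ≤ 2 * (F1.card : ℝ) := by exact_mod_cast hmb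
  have hsq : 2 * (m : ℝ) + 1 ≤ Real.sqrt (8 * (F1.card : ℝ) + 1) := by
    have h1 : (2 * (m : ℝ) + 1) ^ 2 ≤ 8 * (F1.card : ℝ) + 1 := by nlinarith
    calc 2 * (m : ℝ) + 1 = Real.sqrt ((2 * (m : ℝ) + 1) ^ 2) :=
          (Real.sqrt_sq (by positivity)).symm
      _ ≤ _ := Real.sqrt_le_sqrt h1
  have hdR : ((F1 ∆ F2).card : ℝ) ≤ (m : ℝ) * (lineDiff F1 F2 : ℝ) := by exact_mod_cast hkey
  have hL2α : (lineDiff F1 F2 : ℝ) = 2 * alpha F1 F2 := by rw [alpha]; ring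
  have hprod : alpha F1 F2 * (2 * (m : ℝ) + 1)
      ≤ alpha F1 F2 * Real.sqrt (8 * (F1.card : ℝ) + 1) :=
    mul_le_mul_of_nonneg_left hsq hα0
  rw [hL2α] at hdR
  nlinarith [hdR, hprod, hα0]
end

section
/- Let F2 and F3 be finite subsets of ℤ² with the same row sums and the same column sums, and let F1 be a uniquely determined neighbour of F2 (hence also of F3). Put α = α(F2, F1). Then |F2 △ F3| ≤ 2α·√(8|F2| + 1) − 2α. -/
open Finset

/-- `F1` is a uniquely determined neighbour of `F2`: `F1` is uniquely determined by
its line sums, has the same row sums as `F2` in every row, and for some `n` such that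
the column sums of both `F1` and `F2` are supported in columns `1, …, n`, there is a
permutation `σ` of `{1, …, n}` ordering the column sums of `F2` non-increasingly
which also orders the column sums of `F1` non-increasingly. -/
def udNeighbour (F1 F2 : Finset (ℤ × ℤ)) : Prop :=
  uniquelyDetermined F1 ∧ (∀ i, rowSum F1 i = rowSum F2 i) ∧
    ∃ n : ℕ,
      (∀ j : ℤ, j < 1 ∨ (n : ℤ) < j → colSum F2 j = 0) ∧
      (∀ j : ℤ, j < 1 ∨ (n : ℤ) < j → colSum F1 j = 0) ∧
      ∃ σ : Equiv.Perm (Fin n),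
        (∀ k l : Fin n, k ≤ l →
          colSum F2 ((σ l : ℕ) + 1 : ℤ) ≤ colSum F2 ((σ k : ℕ) + 1 : ℤ)) ∧
        (∀ k l : Fin n, k ≤ l →
          colSum F1 ((σ l : ℕ) + 1 : ℤ) ≤ colSum F1 ((σ k : ℕ) + 1 : ℤ))

open scoped symmDiff

lemma vd_exists_mem_not_mem {α : Type*} [DecidableEq α] {s t : Finset α}
    (h : t.card < s.card) : ∃ x ∈ s, x ∉ t := by
  by_contra hc
  push_neg at hc
  exact absurd (Finset.card_le_card fun x hx => hc x hx) (not_le.mpr h)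

lemma vd_move_filter_card (A : Finset (ℤ × ℤ)) (x y : ℤ × ℤ) (hx : x ∈ A) (hy : y ∉ A)
    (p : ℤ × ℤ → Prop) [DecidablePred p] :
    (((insert y (A.erase x)).filter p).card : ℤ)
      = ((A.filter p).card : ℤ) + (if p y then 1 else 0) - (if p x then 1 else 0) := by
  have hxf : p x → x ∈ A.filter p := fun h => Finset.mem_filter.mpr ⟨hx, h⟩
  have hyf : y ∉ (A.filter p).erase x := by
    intro h
    exact hy (Finset.mem_filter.mp (Finset.mem_of_mem_erase h)).1
  have hyf' : y ∉ A.filter p := fun h => hy (Finset.mem_filter.mp h).1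
  rw [Finset.filter_insert, Finset.filter_erase]
  by_cases hpy : p y <;> by_cases hpx : p x <;> simp only [hpy, hpx, if_true, if_false]
  · rw [Finset.card_insert_of_notMem hyf, Finset.card_erase_of_mem (hxf hpx)]
    have : 1 ≤ (A.filter p).card := Finset.card_pos.mpr ⟨x, hxf hpx⟩
    push_cast [Nat.cast_sub this]
    ring
  · rw [Finset.erase_eq_of_notMem (fun h => hpx (Finset.mem_filter.mp h).2),
      Finset.card_insert_of_notMem hyf']
    push_cast
    ring
  · rw [Finset.card_erase_of_mem (hxf hpx)]
    have : 1 ≤ (A.filter p).card := Finset.card_pos.mpr ⟨x, hxf hpx⟩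
    push_cast [Nat.cast_sub this]
    ring
  · rw [Finset.erase_eq_of_notMem (fun h => hpx (Finset.mem_filter.mp h).2)]
    ring

lemma vd_move_rowSum (A : Finset (ℤ × ℤ)) (x y : ℤ × ℤ) (hx : x ∈ A) (hy : y ∉ A) (i : ℤ) :
    rowSum (insert y (A.erase x)) i
      = rowSum A i + (if y.1 = i then 1 else 0) - (if x.1 = i then 1 else 0) :=
  vd_move_filter_card A x y hx hy _

lemma vd_move_colSum (A : Finset (ℤ × ℤ)) (x y : ℤ × ℤ) (hx : x ∈ A) (hy : y ∉ A) (j : ℤ) :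
    colSum (insert y (A.erase x)) j
      = colSum A j + (if y.2 = j then 1 else 0) - (if x.2 = j then 1 else 0) :=
  vd_move_filter_card A x y hx hy _

lemma vd_move_symmDiff_card (A B : Finset (ℤ × ℤ)) (x y : ℤ × ℤ)
    (hxA : x ∈ A) (hxB : x ∉ B) (hyB : y ∈ B) (hyA : y ∉ A) :
    ((insert y (A.erase x)) ∆ B).card + 2 = (A ∆ B).card := by
  have hxy : x ≠ y := fun h => hxB (h ▸ hyB)
  have hset : (insert y (A.erase x)) ∆ B = ((A ∆ B).erase x).erase y := by
    ext z
    simp only [Finset.mem_symmDiff, Finset.mem_insert, Finset.mem_erase]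
    by_cases hzx : z = x <;> by_cases hzy : z = y
    · exact absurd (hzx ▸ hzy.symm ▸ rfl) hxy
    · subst hzx; simp [hxy, hxA, hxB]
    · subst hzy; simp [hyA, hyB]
    · simp [hzx, hzy]
  rw [hset, Finset.card_erase_of_mem, Finset.card_erase_of_mem]
  · have h1 : x ∈ A ∆ B := Finset.mem_symmDiff.mpr (Or.inl ⟨hxA, hxB⟩)
    have : 1 ≤ (A ∆ B).card := Finset.card_pos.mpr ⟨x, h1⟩
    have h2 : y ∈ (A ∆ B).erase x := Finset.mem_erase.mpr
      ⟨fun h => hxB (h ▸ hyB), Finset.mem_symmDiff.mpr (Or.inr ⟨hyB, hyA⟩)⟩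
    have : 2 ≤ (A ∆ B).card := by
      have := Finset.card_erase_of_mem h1
      have h3 : 1 ≤ ((A ∆ B).erase x).card := Finset.card_pos.mpr ⟨y, h2⟩
      omega
    omega
  · exact Finset.mem_symmDiff.mpr (Or.inl ⟨hxA, hxB⟩)
  · exact Finset.mem_erase.mpr
      ⟨fun h => hxB (h ▸ hyB), Finset.mem_symmDiff.mpr (Or.inr ⟨hyB, hyA⟩)⟩

lemma vd_rowSum_nonneg (A : Finset (ℤ × ℤ)) (i : ℤ) : 0 ≤ rowSum A i := Int.natCast_nonneg _

lemma vd_colSum_nonneg (A : Finset (ℤ × ℤ)) (j : ℤ) : 0 ≤ colSum A j := Int.natCast_nonneg _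

lemma vd_card_eq_sum_rowSum (A : Finset (ℤ × ℤ)) (I : Finset ℤ)
    (hI : ∀ p ∈ A, p.1 ∈ I) : (A.card : ℤ) = ∑ i ∈ I, rowSum A i := by
  unfold rowSum
  have := Finset.card_eq_sum_card_fiberwise (f := Prod.fst) hI
  push_cast [this]
  rfl

lemma vd_card_eq_sum_colSum (A : Finset (ℤ × ℤ)) (J : Finset ℤ)
    (hJ : ∀ p ∈ A, p.2 ∈ J) : (A.card : ℤ) = ∑ j ∈ J, colSum A j := by
  unfold colSum
  have := Finset.card_eq_sum_card_fiberwise (f := Prod.snd) hJ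
  push_cast [this]
  rfl

lemma vd_colSum_pos_exists {A B : Finset (ℤ × ℤ)} {j : ℤ} (h : colSum B j < colSum A j) :
    ∃ i : ℤ, (i, j) ∈ A ∧ (i, j) ∉ B := by
  have := vd_exists_mem_not_mem (α := ℤ × ℤ)
    (s := A.filter fun p => p.2 = j) (t := B.filter fun p => p.2 = j) (by unfold colSum at h; exact_mod_cast h)
  obtain ⟨x, hxA, hxB⟩ := this
  obtain ⟨hxA', hx2⟩ := Finset.mem_filter.mp hxA
  refine ⟨x.1, by rwa [show (x.1, j) = x by rw [← hx2]], fun h' => hxB ?_⟩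
  rw [show x = (x.1, j) by rw [← hx2]]
  exact Finset.mem_filter.mpr ⟨h', rfl⟩

lemma vd_row_exchange {A B : Finset (ℤ × ℤ)} {i j₀ : ℤ}
    (hrow : rowSum A i = rowSum B i) (h1 : (i, j₀) ∈ A) (h2 : (i, j₀) ∉ B) :
    ∃ j₁ : ℤ, (i, j₁) ∈ B ∧ (i, j₁) ∉ A := by
  have hsub : ¬ (B.filter fun p => p.1 = i) ⊆ (A.filter fun p => p.1 = i) := by
    intro hsub
    have heq : (B.filter fun p => p.1 = i) = (A.filter fun p => p.1 = i) :=
      Finset.eq_of_subset_of_card_le hsub (by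
        have : (A.filter fun p => p.1 = i).card = (B.filter fun p => p.1 = i).card := by
          unfold rowSum at hrow; exact_mod_cast hrow
        omega)
    have : (i, j₀) ∈ B.filter fun p => p.1 = i := by
      rw [heq]; exact Finset.mem_filter.mpr ⟨h1, rfl⟩
    exact h2 (Finset.mem_filter.mp this).1
  obtain ⟨x, hxB, hxA⟩ := Finset.not_subset.mp hsub
  obtain ⟨hxB', hx1⟩ := Finset.mem_filter.mp hxB
  refine ⟨x.2, by rwa [show (i, x.2) = x by rw [← hx1]], fun h' => hxA ?_⟩
  rw [show x = (i, x.2) by rw [← hx1]]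
  exact Finset.mem_filter.mpr ⟨h', rfl⟩

lemma vd_colSum_pos {B : Finset (ℤ × ℤ)} {i j : ℤ} (h : (i, j) ∈ B) : 0 < colSum B j := by
  unfold colSum
  have : 0 < (B.filter fun p => p.2 = j).card :=
    Finset.card_pos.mpr ⟨(i, j), Finset.mem_filter.mpr ⟨h, rfl⟩⟩
  exact_mod_cast this

lemma vd_rowSum_pos {B : Finset (ℤ × ℤ)} {i j : ℤ} (h : (i, j) ∈ B) : 0 < rowSum B i := by
  unfold rowSum
  have : 0 < (B.filter fun p => p.1 = i).card :=
    Finset.card_pos.mpr ⟨(i, j), Finset.mem_filter.mpr ⟨h, rfl⟩⟩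
  exact_mod_cast this

lemma vd_nesting {B : Finset (ℤ × ℤ)} (hB : uniquelyDetermined B) {i i' j : ℤ}
    (h1 : (i, j) ∈ B) (h2 : (i', j) ∉ B) : rowSum B i' < rowSum B i := by
  by_contra hcon
  push_neg at hcon
  have hii : i ≠ i' := fun h => h2 (h ▸ h1)
  -- column sets of the two rows
  set Ci := (B.filter fun p => p.1 = i).image Prod.snd with hCi
  set Ci' := (B.filter fun p => p.1 = i').image Prod.snd with hCi'
  have hmemCi : ∀ u : ℤ, u ∈ Ci ↔ (i, u) ∈ B := by
    intro u
    constructor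
    · intro hu
      obtain ⟨p, hp, hpu⟩ := Finset.mem_image.mp hu
      obtain ⟨hpB, hp1⟩ := Finset.mem_filter.mp hp
      rwa [show (i, u) = p from Prod.ext hp1.symm hpu.symm] 
    · intro hu
      exact Finset.mem_image.mpr ⟨(i, u), Finset.mem_filter.mpr ⟨hu, rfl⟩, rfl⟩
  have hmemCi' : ∀ u : ℤ, u ∈ Ci' ↔ (i', u) ∈ B := by
    intro u
    constructor
    · intro hu
      obtain ⟨p, hp, hpu⟩ := Finset.mem_image.mp hu
      obtain ⟨hpB, hp1⟩ := Finset.mem_filter.mp hp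
      rwa [show (i', u) = p from Prod.ext hp1.symm hpu.symm]
    · intro hu
      exact Finset.mem_image.mpr ⟨(i', u), Finset.mem_filter.mpr ⟨hu, rfl⟩, rfl⟩
  have hcardCi : (Ci.card : ℤ) = rowSum B i := by
    unfold rowSum
    congr 1
    exact Finset.card_image_of_injOn (fun p hp q hq hpq =>
      Prod.ext ((Finset.mem_filter.mp hp).2.trans (Finset.mem_filter.mp hq).2.symm) hpq)
  have hcardCi' : (Ci'.card : ℤ) = rowSum B i' := by
    unfold rowSum
    congr 1
    exact Finset.card_image_of_injOn (fun p hp q hq hpq =>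
      Prod.ext ((Finset.mem_filter.mp hp).2.trans (Finset.mem_filter.mp hq).2.symm) hpq)
  -- find j' ∈ Ci' \ Ci
  have hex : ∃ j' : ℤ, j' ∈ Ci' ∧ j' ∉ Ci := by
    by_contra hc
    push_neg at hc
    have hsub : Ci' ⊆ Ci := fun u hu => hc u hu
    have : Ci' = Ci := Finset.eq_of_subset_of_card_le hsub (by
      have : (Ci.card : ℤ) ≤ (Ci'.card : ℤ) := by rw [hcardCi, hcardCi']; exact hcon
      exact_mod_cast this)
    have : j ∈ Ci' := this ▸ (hmemCi j).mpr h1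
    exact h2 ((hmemCi' j).mp this)
  obtain ⟨j', hj'1, hj'2⟩ := hex
  have hb1 : (i', j') ∈ B := (hmemCi' j').mp hj'1
  have hb2 : (i, j') ∉ B := fun h => hj'2 ((hmemCi j').mpr h)
  have hjj : j ≠ j' := fun h => hb2 (h ▸ h1)
  -- double switch
  set B1 := insert (i, j') (B.erase (i, j)) with hB1
  have hmem1 : (i', j') ∈ B1 := by
    apply Finset.mem_insert_of_mem
    exact Finset.mem_erase.mpr ⟨by simp [hii.symm, Prod.ext_iff], hb1⟩
  have hmem2 : (i', j) ∉ B1 := by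
    intro h
    rcases Finset.mem_insert.mp h with h | h
    · exact hii (congrArg Prod.fst h).symm
    · exact h2 (Finset.mem_of_mem_erase h)
  set B2 := insert (i', j) (B1.erase (i', j')) with hB2
  have hrowB1 := vd_move_rowSum B (i, j) (i, j') h1 hb2
  have hcolB1 := vd_move_colSum B (i, j) (i, j') h1 hb2
  have hrowB2 := vd_move_rowSum B1 (i', j') (i', j) hmem1 hmem2
  have hcolB2 := vd_move_colSum B1 (i', j') (i', j) hmem1 hmem2
  have heq : B2 = B := by
    apply hB
    · intro t
      rw [hrowB2 t, hrowB1 t]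
      simp only
      split_ifs <;> ring
    · intro u
      rw [hcolB2 u, hcolB1 u]
      simp only
      split_ifs with h h' <;> omega
  have : (i', j) ∈ B := heq ▸ Finset.mem_insert_self _ _
  exact h2 this

noncomputable def vdV (B : Finset (ℤ × ℤ)) : Finset ℤ := (B.image Prod.fst).image (rowSum B)

lemma vd_mem_vdV {B : Finset (ℤ × ℤ)} {i j : ℤ} (h : (i, j) ∈ B) : rowSum B i ∈ vdV B :=
  Finset.mem_image.mpr ⟨i, Finset.mem_image.mpr ⟨(i, j), h, rfl⟩, rfl⟩

/-- The chain lemma. -/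

lemma vd_chain (B : Finset (ℤ × ℤ)) (hB : uniquelyDetermined B) :
    ∀ m : ℕ, ∀ A : Finset (ℤ × ℤ), (∀ t, rowSum A t = rowSum B t) →
    ∀ i j₀ : ℤ, (i, j₀) ∈ A → (i, j₀) ∉ B →
    (((vdV B).filter (· ≤ rowSum B i)).card ≤ m) →
    ∃ (A' : Finset (ℤ × ℤ)) (L : ℕ) (j' : ℤ),
      1 ≤ L ∧ L ≤ m ∧ (∀ t, rowSum A' t = rowSum B t) ∧
      (A' ∆ B).card + 2 * L = (A ∆ B).card ∧
      (∀ u, colSum A' u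
        = colSum A u - (if j₀ = u then 1 else 0) + (if j' = u then 1 else 0)) ∧
      colSum A' j' ≤ colSum B j' ∧ 0 < colSum B j' := by
  intro m
  induction m with
  | zero =>
    intro A hrow i j₀ hA hBn hm
    exfalso
    -- row i of B is nonempty, so rowSum B i ∈ vdV B and the filter is nonempty
    have hpos : 0 < rowSum B i := by
      rw [← hrow i]; exact vd_rowSum_pos hA
    have hiB : ∃ j, (i, j) ∈ B := by
      unfold rowSum at hpos
      have : 0 < (B.filter fun p => p.1 = i).card := by exact_mod_cast hpos
      obtain ⟨p, hp⟩ := Finset.card_pos.mp this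
      obtain ⟨hpB, hp1⟩ := Finset.mem_filter.mp hp
      exact ⟨p.2, by rwa [show (i, p.2) = p from Prod.ext hp1.symm rfl]⟩
    obtain ⟨j, hj⟩ := hiB
    have : rowSum B i ∈ (vdV B).filter (· ≤ rowSum B i) :=
      Finset.mem_filter.mpr ⟨vd_mem_vdV hj, le_refl _⟩
    have : 0 < ((vdV B).filter (· ≤ rowSum B i)).card := Finset.card_pos.mpr ⟨_, this⟩
    omega
  | succ m ih =>
    intro A hrow i j₀ hA hBn hm
    obtain ⟨j₁, hj₁B, hj₁A⟩ := vd_row_exchange (hrow i) hA hBn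
    set A₁ := insert (i, j₁) (A.erase (i, j₀)) with hA₁def
    have hrow1 : ∀ t, rowSum A₁ t = rowSum B t := by
      intro t
      rw [vd_move_rowSum A (i, j₀) (i, j₁) hA hj₁A t]
      simp only
      rw [← hrow t]
      split_ifs <;> ring
    have hcol1 : ∀ u, colSum A₁ u
        = colSum A u - (if j₀ = u then 1 else 0) + (if j₁ = u then 1 else 0) := by
      intro u
      rw [vd_move_colSum A (i, j₀) (i, j₁) hA hj₁A u]
      simp only
      ring
    have hsd1 : (A₁ ∆ B).card + 2 = (A ∆ B).card :=
      vd_move_symmDiff_card A B (i, j₀) (i, j₁) hA hBn hj₁B hj₁A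
    by_cases hle : colSum A₁ j₁ ≤ colSum B j₁
    · refine ⟨A₁, 1, j₁, le_refl _, by omega, hrow1, by omega, hcol1, hle, vd_colSum_pos hj₁B⟩
    · push_neg at hle
      obtain ⟨i₂, hi₂A, hi₂B⟩ := vd_colSum_pos_exists hle
      have hlt : rowSum B i₂ < rowSum B i := vd_nesting hB hj₁B hi₂B
      have hmu : ((vdV B).filter (· ≤ rowSum B i₂)).card ≤ m := by
        have hsub : (vdV B).filter (· ≤ rowSum B i₂)
            ⊆ ((vdV B).filter (· ≤ rowSum B i)).erase (rowSum B i) := by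
          intro v hv
          obtain ⟨hv1, hv2⟩ := Finset.mem_filter.mp hv
          exact Finset.mem_erase.mpr ⟨by omega, Finset.mem_filter.mpr ⟨hv1, by omega⟩⟩
        have hmem : rowSum B i ∈ (vdV B).filter (· ≤ rowSum B i) :=
          Finset.mem_filter.mpr ⟨vd_mem_vdV hj₁B, le_refl _⟩
        have := Finset.card_le_card hsub
        rw [Finset.card_erase_of_mem hmem] at this
        omega
      obtain ⟨A', L, j', hL1, hLm, hrow', hsd', hcol', hle', hpos'⟩ :=
        ih A₁ hrow1 i₂ j₁ hi₂A hi₂B hmu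
      refine ⟨A', L + 1, j', by omega, by omega, hrow', by omega, ?_, hle', hpos'⟩
      intro u
      have h1 := hcol' u
      have h2 := hcol1 u
      split_ifs at * <;> omega

lemma vd_colSum_mem_support {A : Finset (ℤ × ℤ)} {J : Finset ℤ}
    (hsupp : ∀ j, j ∉ J → colSum A j = 0) {j : ℤ} (h : 0 < colSum A j) : j ∈ J := by
  by_contra hc
  rw [hsupp j hc] at h
  exact lt_irrefl 0 h

lemma vd_mem_support {A : Finset (ℤ × ℤ)} {J : Finset ℤ}
    (hsupp : ∀ j, j ∉ J → colSum A j = 0) : ∀ p ∈ A, p.2 ∈ J := by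
  intro p hp
  exact vd_colSum_mem_support hsupp (by
    have : 0 < (A.filter fun q => q.2 = p.2).card :=
      Finset.card_pos.mpr ⟨p, Finset.mem_filter.mpr ⟨hp, rfl⟩⟩
    unfold colSum
    exact_mod_cast this)

lemma vd_main (B : Finset (ℤ × ℤ)) (hB : uniquelyDetermined B) (J : Finset ℤ)
    (hJB : ∀ j, j ∉ J → colSum B j = 0) :
    ∀ n : ℕ, ∀ A : Finset (ℤ × ℤ), (A ∆ B).card = n →
    (∀ t, rowSum A t = rowSum B t) → (∀ j, j ∉ J → colSum A j = 0) →
    ((A ∆ B).card : ℤ) ≤ (vdV B).card * ∑ j ∈ J, |colSum A j - colSum B j| := by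
  intro n
  induction n using Nat.strong_induction_on with
  | _ n ih =>
  intro A hn hrow hsupp
  by_cases hAB : A = B
  · subst hAB
    simp only [symmDiff_self, Finset.bot_eq_empty, Finset.card_empty, Nat.cast_zero]
    exact mul_nonneg (Int.natCast_nonneg _)
      (Finset.sum_nonneg fun _ _ => abs_nonneg _)
  · -- there is a column with excess
    have hcardAB : (A.card : ℤ) = (B.card : ℤ) := by
      set I := (A ∪ B).image Prod.fst with hI
      rw [vd_card_eq_sum_rowSum A I (fun p hp =>
          Finset.mem_image.mpr ⟨p, Finset.mem_union_left _ hp, rfl⟩),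
        vd_card_eq_sum_rowSum B I (fun p hp =>
          Finset.mem_image.mpr ⟨p, Finset.mem_union_right _ hp, rfl⟩)]
      exact Finset.sum_congr rfl fun i _ => hrow i
    have hex : ∃ j₀ : ℤ, colSum B j₀ < colSum A j₀ := by
      by_contra hc
      push_neg at hc
      have hsumeq : ∑ j ∈ J, colSum A j = ∑ j ∈ J, colSum B j := by
        rw [← vd_card_eq_sum_colSum A J (vd_mem_support hsupp),
          ← vd_card_eq_sum_colSum B J (vd_mem_support hJB), hcardAB]
      have hpt : ∀ j ∈ J, colSum A j = colSum B j :=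
        (Finset.sum_eq_sum_iff_of_le fun j _ => hc j).mp hsumeq
      apply hAB
      apply hB
      · exact hrow
      · intro j
        by_cases hj : j ∈ J
        · exact hpt j hj
        · rw [hsupp j hj, hJB j hj]
    obtain ⟨j₀, hj₀⟩ := hex
    obtain ⟨i₁, hi₁A, hi₁B⟩ := vd_colSum_pos_exists hj₀
    obtain ⟨A', L, j', hL1, hLk, hrow', hsd', hcol', hle', hposB'⟩ :=
      vd_chain B hB (vdV B).card A hrow i₁ j₀ hi₁A hi₁B (Finset.card_filter_le _ _)
    have hj₀J : j₀ ∈ J := vd_colSum_mem_support hsupp (by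
      have := vd_colSum_nonneg B j₀; omega)
    have hj'J : j' ∈ J := vd_colSum_mem_support hJB hposB'
    have hne : j' ≠ j₀ := by
      intro h
      subst h
      have := hcol' j'
      simp at this
      omega
    -- support of A'
    have hsupp' : ∀ j, j ∉ J → colSum A' j = 0 := by
      intro j hj
      have h1 := hcol' j
      have h2 : j₀ ≠ j := fun h => hj (h ▸ hj₀J)
      have h3 : j' ≠ j := fun h => hj (h ▸ hj'J)
      rw [if_neg h2, if_neg h3, hsupp j hj] at h1
      omega
    -- the new discrepancy sum is the old one minus 2
    have hDsum : ∑ j ∈ J, |colSum A' j - colSum B j|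
        = (∑ j ∈ J, |colSum A j - colSum B j|) - 2 := by
      have hterm : ∀ j ∈ J, |colSum A' j - colSum B j|
          = |colSum A j - colSum B j|
            - (if j₀ = j then 1 else 0) - (if j' = j then 1 else 0) := by
        intro j _
        have h1 := hcol' j
        by_cases e0 : j₀ = j <;> by_cases e1 : j' = j
        · exact absurd (e1.trans e0.symm) hne
        · subst e0
          rw [if_pos rfl, if_neg e1] at h1 ⊢
          have hA'j : colSum A' j₀ = colSum A j₀ - 1 := by omega
          rw [hA'j, abs_of_nonneg (by omega), abs_of_nonneg (by omega)]
          ring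
        · subst e1
          rw [if_neg e0, if_pos rfl] at h1 ⊢
          have hA'j : colSum A' j' = colSum A j' + 1 := by omega
          have hb := hle'
          rw [hA'j, abs_of_nonpos (by omega), abs_of_nonpos (by omega)]
          ring
        · rw [if_neg e0, if_neg e1] at h1 ⊢
          rw [show colSum A' j = colSum A j by omega]
          ring
      rw [Finset.sum_congr rfl hterm]
      rw [Finset.sum_sub_distrib, Finset.sum_sub_distrib]
      rw [Finset.sum_ite_eq J j₀ (fun _ => (1 : ℤ)), Finset.sum_ite_eq J j' (fun _ => (1 : ℤ))]
      rw [if_pos hj₀J, if_pos hj'J]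
      ring
    -- apply the induction hypothesis to A'
    have hlt : (A' ∆ B).card < n := by omega
    have hIH := ih (A' ∆ B).card hlt A' rfl hrow' hsupp'
    rw [hDsum] at hIH
    have hcast : ((A ∆ B).card : ℤ) = ((A' ∆ B).card : ℤ) + 2 * L := by
      exact_mod_cast congrArg (Nat.cast : ℕ → ℤ) hsd'.symm
    have hk : (L : ℤ) ≤ ((vdV B).card : ℤ) := by exact_mod_cast hLk
    have hknn : (0 : ℤ) ≤ ((vdV B).card : ℤ) := Int.natCast_nonneg _
    calc ((A ∆ B).card : ℤ) = ((A' ∆ B).card : ℤ) + 2 * L := hcast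
      _ ≤ (vdV B).card * ((∑ j ∈ J, |colSum A j - colSum B j|) - 2) + 2 * L := by omega
      _ ≤ (vdV B).card * ∑ j ∈ J, |colSum A j - colSum B j| := by nlinarith

lemma vd_sum_distinct : ∀ (n : ℕ) (V : Finset ℤ), V.card = n → (∀ v ∈ V, 1 ≤ v) →
    (V.card : ℤ) * (V.card + 1) ≤ 2 * ∑ v ∈ V, v := by
  intro n
  induction n with
  | zero =>
    intro V h _
    rw [Finset.card_eq_zero.mp h]
    simp
  | succ n ih =>
    intro V hV hpos
    have hne : V.Nonempty := Finset.card_pos.mp (by omega)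
    set m := V.max' hne with hm
    have hmV : m ∈ V := V.max'_mem hne
    have hm1 : 1 ≤ m := hpos m hmV
    have hsub : V ⊆ Finset.Icc 1 m := fun v hv => Finset.mem_Icc.mpr ⟨hpos v hv, V.le_max' v hv⟩
    have hcard : V.card ≤ (Finset.Icc (1:ℤ) m).card := Finset.card_le_card hsub
    have hIcc : ((Finset.Icc (1:ℤ) m).card : ℤ) = m := by
      rw [Int.card_Icc]
      omega
    have hkm : (V.card : ℤ) ≤ m := by
      have : ((V.card : ℕ) : ℤ) ≤ ((Finset.Icc (1:ℤ) m).card : ℤ) := by exact_mod_cast hcard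
      omega
    have hV' : (V.erase m).card = n := by
      rw [Finset.card_erase_of_mem hmV, hV]
      omega
    have hsum : ∑ v ∈ V.erase m, v + m = ∑ v ∈ V, v := Finset.sum_erase_add V _ hmV
    have hih := ih (V.erase m) hV' (fun v hv => hpos v (Finset.mem_of_mem_erase hv))
    rw [hV'] at hih
    rw [hV]
    push_cast at *
    nlinarith [hih, hkm, hsum]

lemma vd_sum_vdV_le (B : Finset (ℤ × ℤ)) : ∑ v ∈ vdV B, v ≤ (B.card : ℤ) := by
  have h1 : (B.card : ℤ) = ∑ i ∈ B.image Prod.fst, rowSum B i :=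
    vd_card_eq_sum_rowSum B _ (fun p hp => Finset.mem_image.mpr ⟨p, hp, rfl⟩)
  have h2 : ∑ v ∈ vdV B, (∑ i ∈ (B.image Prod.fst).filter fun i => rowSum B i = v, rowSum B i)
      = ∑ i ∈ B.image Prod.fst, rowSum B i :=
    Finset.sum_fiberwise_of_maps_to (fun i hi => Finset.mem_image.mpr ⟨i, hi, rfl⟩) _
  have h3 : ∀ v ∈ vdV B,
      v ≤ ∑ i ∈ (B.image Prod.fst).filter fun i => rowSum B i = v, rowSum B i := by
    intro v hv
    obtain ⟨i, hi, hiv⟩ := Finset.mem_image.mp hv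
    have hmem : i ∈ (B.image Prod.fst).filter fun i => rowSum B i = v :=
      Finset.mem_filter.mpr ⟨hi, hiv⟩
    have : ∀ i' ∈ (B.image Prod.fst).filter fun i => rowSum B i = v, rowSum B i' = v :=
      fun i' hi' => (Finset.mem_filter.mp hi').2
    rw [Finset.sum_congr rfl this, Finset.sum_const, nsmul_eq_mul]
    have hpos : 1 ≤ v := by
      obtain ⟨p, hp, hp1⟩ := Finset.mem_image.mp hi
      have := vd_rowSum_pos (show (p.1, p.2) ∈ B by simpa using hp)
      rw [hp1] at this
      omega
    have hc : 1 ≤ ((B.image Prod.fst).filter fun i => rowSum B i = v).card :=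
      Finset.card_pos.mpr ⟨i, hmem⟩
    nlinarith [hc, hpos]
  calc ∑ v ∈ vdV B, v
      ≤ ∑ v ∈ vdV B, ∑ i ∈ (B.image Prod.fst).filter fun i => rowSum B i = v, rowSum B i :=
        Finset.sum_le_sum h3
    _ = (B.card : ℤ) := by rw [h2, ← h1]

lemma vd_colSum_zero {A C : Finset (ℤ × ℤ)} (h : A ⊆ C) {j : ℤ}
    (hj : j ∉ C.image Prod.snd) : colSum A j = 0 := by
  unfold colSum
  rw [Finset.filter_eq_empty_iff.mpr fun {p} hp hpj =>
    hj (Finset.mem_image.mpr ⟨p, h hp, hpj⟩)]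
  simp

/-- If `F2` and `F3` have the same line sums and `F1` is a uniquely determined neighbour
of `F2`, then with `α = α(F2, F1)` we have `|F2 △ F3| ≤ 2α·√(8|F2| + 1) − 2α`. -/
theorem symmDiff_card_le_of_eq_lineSums (F2 F3 F1 : Finset (ℤ × ℤ))
    (hrows : ∀ i, rowSum F2 i = rowSum F3 i) (hcols : ∀ j, colSum F2 j = colSum F3 j)
    (hnb : udNeighbour F1 F2) :
    ((F2 ∆ F3).card : ℝ) ≤
      2 * alpha F2 F1 * Real.sqrt (8 * F2.card + 1) - 2 * alpha F2 F1 := by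
  obtain ⟨hB, hrow12, -⟩ := hnb
  set J := (F2 ∪ F1).image Prod.snd with hJ
  set S := ∑ j ∈ J, |colSum F2 j - colSum F1 j| with hS
  set k := (vdV F1).card with hk
  have hJ1 : ∀ j, j ∉ J → colSum F1 j = 0 :=
    fun j hj => vd_colSum_zero Finset.subset_union_right hj
  have hJ2 : ∀ j, j ∉ J → colSum F2 j = 0 :=
    fun j hj => vd_colSum_zero Finset.subset_union_left hj
  have hJ3 : ∀ j, j ∉ J → colSum F3 j = 0 := fun j hj => (hcols j) ▸ hJ2 j hj
  have h2 : ((F2 ∆ F1).card : ℤ) ≤ k * S :=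
    vd_main F1 hB J hJ1 _ F2 rfl (fun t => (hrow12 t).symm) hJ2
  have h3' : ((F3 ∆ F1).card : ℤ) ≤ k * ∑ j ∈ J, |colSum F3 j - colSum F1 j| :=
    vd_main F1 hB J hJ1 _ F3 rfl (fun t => ((hrow12 t).trans (hrows t)).symm) hJ3
  have h3 : ((F3 ∆ F1).card : ℤ) ≤ k * S := by
    rwa [show ∑ j ∈ J, |colSum F3 j - colSum F1 j| = S from
      Finset.sum_congr rfl fun j _ => by rw [← hcols j]] at h3'
  -- triangle inequality for the symmetric difference
  have htri : (F2 ∆ F3).card ≤ (F2 ∆ F1).card + (F3 ∆ F1).card := by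
    have hsub : F2 ∆ F3 ⊆ (F2 ∆ F1) ∪ (F1 ∆ F3) := symmDiff_triangle F2 F1 F3
    calc (F2 ∆ F3).card ≤ ((F2 ∆ F1) ∪ (F1 ∆ F3)).card := Finset.card_le_card hsub
      _ ≤ (F2 ∆ F1).card + (F1 ∆ F3).card := Finset.card_union_le _ _
      _ = (F2 ∆ F1).card + (F3 ∆ F1).card := by rw [symmDiff_comm F1 F3]
  have hZ : ((F2 ∆ F3).card : ℤ) ≤ 2 * k * S := by
    have h4 : ((F2 ∆ F3).card : ℤ) ≤ ((F2 ∆ F1).card : ℤ) + ((F3 ∆ F1).card : ℤ) := by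
      exact_mod_cast htri
    have h5 : (2 : ℤ) * k * S = k * S + k * S := by ring
    linarith
  -- lineDiff F2 F1 = S
  have hLD : lineDiff F2 F1 = S := by
    unfold lineDiff
    rw [show ∑ i ∈ (F2 ∪ F1).image Prod.fst, |rowSum F2 i - rowSum F1 i| = 0 from
      Finset.sum_eq_zero fun i _ => by rw [hrow12 i]; simp]
    simp [hS, hJ]
  have hS0 : (0 : ℤ) ≤ S := Finset.sum_nonneg fun _ _ => abs_nonneg _
  -- k(k+1) ≤ 2 |F2|
  have hcard12 : (F1.card : ℤ) = (F2.card : ℤ) := by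
    set I := (F1 ∪ F2).image Prod.fst with hI
    rw [vd_card_eq_sum_rowSum F1 I (fun p hp =>
        Finset.mem_image.mpr ⟨p, Finset.mem_union_left _ hp, rfl⟩),
      vd_card_eq_sum_rowSum F2 I (fun p hp =>
        Finset.mem_image.mpr ⟨p, Finset.mem_union_right _ hp, rfl⟩)]
    exact Finset.sum_congr rfl fun i _ => hrow12 i
  have hkk : (k : ℤ) * (k + 1) ≤ 2 * (F2.card : ℤ) := by
    have h1 := vd_sum_distinct (vdV F1).card (vdV F1) rfl (by
      intro v hv
      obtain ⟨i, hi, hiv⟩ := Finset.mem_image.mp hv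
      obtain ⟨p, hp, hp1⟩ := Finset.mem_image.mp hi
      have := vd_rowSum_pos (show (p.1, p.2) ∈ F1 by simpa using hp)
      rw [hp1, hiv] at this
      omega)
    have h2 := vd_sum_vdV_le F1
    rw [hcard12] at h2
    rw [← hk] at h1
    linarith
  -- pass to the reals
  have halpha : alpha F2 F1 = (S : ℝ) / 2 := by
    unfold alpha
    rw [hLD]
  rw [halpha]
  have hZR : ((F2 ∆ F3).card : ℝ) ≤ 2 * (k : ℝ) * (S : ℝ) := by exact_mod_cast hZ
  have hS0R : (0 : ℝ) ≤ (S : ℝ) := by exact_mod_cast hS0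
  have hsq : ((2 * (k : ℝ) + 1)) ^ 2 ≤ 8 * (F2.card : ℝ) + 1 := by
    have : ((k : ℝ)) * ((k : ℝ) + 1) ≤ 2 * (F2.card : ℝ) := by exact_mod_cast hkk
    nlinarith
  have h2k1 : 2 * (k : ℝ) + 1 ≤ Real.sqrt (8 * (F2.card : ℝ) + 1) := by
    rw [show (2 * (k : ℝ) + 1) = Real.sqrt ((2 * (k : ℝ) + 1) ^ 2) from
      (Real.sqrt_sq (by positivity)).symm]
    exact Real.sqrt_le_sqrt hsq
  have hmul := mul_le_mul_of_nonneg_left h2k1 hS0R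
  nlinarith [hZR, hmul]
end
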